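/- arXiv:1801.03410 — 4 statements merged into one kernel-verified Lean document; each statement's English description precedes it below -/
import Mathlib

section
/- With $\mathcal{R}$ as in the previous context (block matrix built from a complex matrix $R$), the Yang–Baxter equation $(\mathcal{R}\otimes I)(I\otimes\mathcal{R})(\mathcal{R}\otimes I)=(I\otimes\mathcal{R})(\mathcal{R}\otimes I)(I\otimes\mathcal{R})$ holds if and only if the following quadratic conditions on $R$ hold: (1) $R^{\lambda\alpha}_{\gamma\rho}R^{\rho\beta}_{\delta\mu}=R^{\lambda\beta}_{\delta\rho}R^{\rho\alpha}_{\gamma\mu}$, (2) $\overline{R}^{\lambda\alpha}_{\gamma\rho}\overline{R}^{\rho\beta}_{\delta\mu}=\overline{R}^{\lambda\beta}_{\delta\rho}\overline{R}^{\rho\alpha}_{\gamma\mu}$, (3) $\overline{R}^{\lambda\alpha}_{\gamma\rho}R^{\rho\beta}_{\delta\mu}=R^{\lambda\beta}_{\delta\rho}\overline{R}^{\rho\alpha}_{\gamma\mu}$, (4) $R^{\lambda\alpha}_{\gamma\nu}R^{\mu\gamma}_{\beta\rho}=R^{\mu\alpha}_{\gamma\rho}R^{\lambda\gamma}_{\beta\nu}$,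 (5) $\overline{R}^{\lambda\alpha}_{\gamma\nu}\overline{R}^{\mu\gamma}_{\beta\rho}=\overline{R}^{\mu\alpha}_{\gamma\rho}\overline{R}^{\lambda\gamma}_{\beta\nu}$, (6) $R^{\lambda\alpha}_{\gamma\nu}\overline{R}^{\mu\gamma}_{\beta\rho}=\overline{R}^{\mu\alpha}_{\gamma\rho}R^{\lambda\gamma}_{\beta\nu}$, with implicit summation over the repeated index $\rho$ or $\gamma$, for all values of the free indices. -/
open Finset

/-- The big `ℛ` matrix built in block form from `R`; `R l al be m` denotes `R^{λα}_{βμ}`. -/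
noncomputable def calR (N1 N2 : ℕ) (R : Fin N1 → Fin N2 → Fin N2 → Fin N1 → ℂ) :
    (Fin N1 ⊕ Fin N2) → (Fin N1 ⊕ Fin N2) → (Fin N1 ⊕ Fin N2) → (Fin N1 ⊕ Fin N2) → ℂ :=
  fun a b c d =>
    match a, b, c, d with
    | .inl l, .inl m, .inl n, .inl r => (if l = r then 1 else 0) * (if m = n then 1 else 0)
    | .inr g, .inr e, .inr al, .inr be => (if g = be then 1 else 0) * (if e = al then 1 else 0)
    | .inl l, .inr al, .inr be, .inl m => R l al be m
    | .inr al, .inl l, .inl m, .inr be => starRingEnd ℂ (R l al be m)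
    | _, _, _, _ => 0

/-- Components of `ℛ ⊗ I` acting on the triple tensor product. -/
noncomputable def RI {ι : Type*} [DecidableEq ι] (ℛ : ι → ι → ι → ι → ℂ) (a b c d e f : ι) : ℂ :=
  ℛ a b d e * (if c = f then 1 else 0)

/-- Components of `I ⊗ ℛ` acting on the triple tensor product. -/
noncomputable def IR {ι : Type*} [DecidableEq ι] (ℛ : ι → ι → ι → ι → ℂ) (a b c d e f : ι) : ℂ :=
  (if a = d then 1 else 0) * ℛ b c e f

/-- Composition of endomorphisms of the triple tensor product, in components. -/
noncomputable def comp3 {ι : Type*} [Fintype ι] (X Y : ι → ι → ι → ι → ι → ι → ℂ) :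
    ι → ι → ι → ι → ι → ι → ℂ :=
  fun a b c g h i => ∑ d, ∑ e, ∑ f, X a b c d e f * Y d e f g h i


@[simp] lemma calR_LLLL {N1 N2 : ℕ} (R : Fin N1 → Fin N2 → Fin N2 → Fin N1 → ℂ) (x0 : Fin N1) (x1 : Fin N1) (x2 : Fin N1) (x3 : Fin N1) :
    calR N1 N2 R (.inl x0) (.inl x1) (.inl x2) (.inl x3) = (if x0 = x3 then 1 else 0) * (if x1 = x2 then 1 else 0) := rfl

@[simp] lemma calR_LLLR {N1 N2 : ℕ} (R : Fin N1 → Fin N2 → Fin N2 → Fin N1 → ℂ) (x0 : Fin N1) (x1 : Fin N1) (x2 : Fin N1) (y3 : Fin N2) :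
    calR N1 N2 R (.inl x0) (.inl x1) (.inl x2) (.inr y3) = 0 := rfl

@[simp] lemma calR_LLRL {N1 N2 : ℕ} (R : Fin N1 → Fin N2 → Fin N2 → Fin N1 → ℂ) (x0 : Fin N1) (x1 : Fin N1) (y2 : Fin N2) (x3 : Fin N1) :
    calR N1 N2 R (.inl x0) (.inl x1) (.inr y2) (.inl x3) = 0 := rfl

@[simp] lemma calR_LLRR {N1 N2 : ℕ} (R : Fin N1 → Fin N2 → Fin N2 → Fin N1 → ℂ) (x0 : Fin N1) (x1 : Fin N1) (y2 : Fin N2) (y3 : Fin N2) :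
    calR N1 N2 R (.inl x0) (.inl x1) (.inr y2) (.inr y3) = 0 := rfl

@[simp] lemma calR_LRLL {N1 N2 : ℕ} (R : Fin N1 → Fin N2 → Fin N2 → Fin N1 → ℂ) (x0 : Fin N1) (y1 : Fin N2) (x2 : Fin N1) (x3 : Fin N1) :
    calR N1 N2 R (.inl x0) (.inr y1) (.inl x2) (.inl x3) = 0 := rfl

@[simp] lemma calR_LRLR {N1 N2 : ℕ} (R : Fin N1 → Fin N2 → Fin N2 → Fin N1 → ℂ) (x0 : Fin N1) (y1 : Fin N2) (x2 : Fin N1) (y3 : Fin N2) :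
    calR N1 N2 R (.inl x0) (.inr y1) (.inl x2) (.inr y3) = 0 := rfl

@[simp] lemma calR_LRRL {N1 N2 : ℕ} (R : Fin N1 → Fin N2 → Fin N2 → Fin N1 → ℂ) (x0 : Fin N1) (y1 : Fin N2) (y2 : Fin N2) (x3 : Fin N1) :
    calR N1 N2 R (.inl x0) (.inr y1) (.inr y2) (.inl x3) = R x0 y1 y2 x3 := rfl

@[simp] lemma calR_LRRR {N1 N2 : ℕ} (R : Fin N1 → Fin N2 → Fin N2 → Fin N1 → ℂ) (x0 : Fin N1) (y1 : Fin N2) (y2 : Fin N2) (y3 : Fin N2) :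
    calR N1 N2 R (.inl x0) (.inr y1) (.inr y2) (.inr y3) = 0 := rfl

@[simp] lemma calR_RLLL {N1 N2 : ℕ} (R : Fin N1 → Fin N2 → Fin N2 → Fin N1 → ℂ) (y0 : Fin N2) (x1 : Fin N1) (x2 : Fin N1) (x3 : Fin N1) :
    calR N1 N2 R (.inr y0) (.inl x1) (.inl x2) (.inl x3) = 0 := rfl

@[simp] lemma calR_RLLR {N1 N2 : ℕ} (R : Fin N1 → Fin N2 → Fin N2 → Fin N1 → ℂ) (y0 : Fin N2) (x1 : Fin N1) (x2 : Fin N1) (y3 : Fin N2) :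
    calR N1 N2 R (.inr y0) (.inl x1) (.inl x2) (.inr y3) = starRingEnd ℂ (R x1 y0 y3 x2) := rfl

@[simp] lemma calR_RLRL {N1 N2 : ℕ} (R : Fin N1 → Fin N2 → Fin N2 → Fin N1 → ℂ) (y0 : Fin N2) (x1 : Fin N1) (y2 : Fin N2) (x3 : Fin N1) :
    calR N1 N2 R (.inr y0) (.inl x1) (.inr y2) (.inl x3) = 0 := rfl

@[simp] lemma calR_RLRR {N1 N2 : ℕ} (R : Fin N1 → Fin N2 → Fin N2 → Fin N1 → ℂ) (y0 : Fin N2) (x1 : Fin N1) (y2 : Fin N2) (y3 : Fin N2) :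
    calR N1 N2 R (.inr y0) (.inl x1) (.inr y2) (.inr y3) = 0 := rfl

@[simp] lemma calR_RRLL {N1 N2 : ℕ} (R : Fin N1 → Fin N2 → Fin N2 → Fin N1 → ℂ) (y0 : Fin N2) (y1 : Fin N2) (x2 : Fin N1) (x3 : Fin N1) :
    calR N1 N2 R (.inr y0) (.inr y1) (.inl x2) (.inl x3) = 0 := rfl

@[simp] lemma calR_RRLR {N1 N2 : ℕ} (R : Fin N1 → Fin N2 → Fin N2 → Fin N1 → ℂ) (y0 : Fin N2) (y1 : Fin N2) (x2 : Fin N1) (y3 : Fin N2) :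
    calR N1 N2 R (.inr y0) (.inr y1) (.inl x2) (.inr y3) = 0 := rfl

@[simp] lemma calR_RRRL {N1 N2 : ℕ} (R : Fin N1 → Fin N2 → Fin N2 → Fin N1 → ℂ) (y0 : Fin N2) (y1 : Fin N2) (y2 : Fin N2) (x3 : Fin N1) :
    calR N1 N2 R (.inr y0) (.inr y1) (.inr y2) (.inl x3) = 0 := rfl

@[simp] lemma calR_RRRR {N1 N2 : ℕ} (R : Fin N1 → Fin N2 → Fin N2 → Fin N1 → ℂ) (y0 : Fin N2) (y1 : Fin N2) (y2 : Fin N2) (y3 : Fin N2) :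
    calR N1 N2 R (.inr y0) (.inr y1) (.inr y2) (.inr y3) = (if y0 = y3 then 1 else 0) * (if y1 = y2 then 1 else 0) := rfl

set_option maxHeartbeats 4000000 in
/-- The Yang–Baxter equation for `ℛ` is equivalent to the six quadratic conditions on `R`. -/
theorem stmt1 (N1 N2 : ℕ) (R : Fin N1 → Fin N2 → Fin N2 → Fin N1 → ℂ) :
    (comp3 (comp3 (RI (calR N1 N2 R)) (IR (calR N1 N2 R))) (RI (calR N1 N2 R))
      = comp3 (comp3 (IR (calR N1 N2 R)) (RI (calR N1 N2 R))) (IR (calR N1 N2 R)))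
    ↔ ((∀ (l m : Fin N1) (al be g de : Fin N2),
          ∑ r, R l al g r * R r be de m = ∑ r, R l be de r * R r al g m)
      ∧ (∀ (l m : Fin N1) (al be g de : Fin N2),
          ∑ r, starRingEnd ℂ (R l al g r) * starRingEnd ℂ (R r be de m)
            = ∑ r, starRingEnd ℂ (R l be de r) * starRingEnd ℂ (R r al g m))
      ∧ (∀ (l m : Fin N1) (al be g de : Fin N2),
          ∑ r, starRingEnd ℂ (R l al g r) * R r be de m
            = ∑ r, R l be de r * starRingEnd ℂ (R r al g m))
      ∧ (∀ (l m n r : Fin N1) (al be : Fin N2),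
          ∑ g, R l al g n * R m g be r = ∑ g, R m al g r * R l g be n)
      ∧ (∀ (l m n r : Fin N1) (al be : Fin N2),
          ∑ g, starRingEnd ℂ (R l al g n) * starRingEnd ℂ (R m g be r)
            = ∑ g, starRingEnd ℂ (R m al g r) * starRingEnd ℂ (R l g be n))
      ∧ (∀ (l m n r : Fin N1) (al be : Fin N2),
          ∑ g, R l al g n * starRingEnd ℂ (R m g be r)
            = ∑ g, starRingEnd ℂ (R m al g r) * R l g be n)) := by
  constructor
  · intro H
    refine ⟨fun l m al be g de => ?_, fun l m al be g de => ?_, fun l m al be g de => ?_,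
      fun l m n r al be => ?_, fun l m n r al be => ?_, fun l m n r al be => ?_⟩
    · have h' := congrFun (congrFun (congrFun (congrFun (congrFun (congrFun H
        (.inl l)) (.inr al)) (.inr be)) (.inr de)) (.inr g)) (.inl m)
      simpa [comp3, RI, IR, Fintype.sum_sum_type, Finset.mul_sum, Finset.sum_mul,
        mul_ite, ite_mul, Finset.sum_ite_eq, Finset.sum_ite_eq'] using h'
    · have h' := congrFun (congrFun (congrFun (congrFun (congrFun (congrFun H
        (.inr al)) (.inr be)) (.inl l)) (.inl m)) (.inr de)) (.inr g)
      simpa [comp3, RI, IR, Fintype.sum_sum_type, Finset.mul_sum, Finset.sum_mul,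
        mul_ite, ite_mul, Finset.sum_ite_eq, Finset.sum_ite_eq'] using h'
    · have h' := congrFun (congrFun (congrFun (congrFun (congrFun (congrFun H
        (.inr al)) (.inl l)) (.inr be)) (.inr de)) (.inl m)) (.inr g)
      simpa [comp3, RI, IR, Fintype.sum_sum_type, Finset.mul_sum, Finset.sum_mul,
        mul_ite, ite_mul, Finset.sum_ite_eq, Finset.sum_ite_eq'] using h'
    · have h' := congrFun (congrFun (congrFun (congrFun (congrFun (congrFun H
        (.inl l)) (.inl m)) (.inr al)) (.inr be)) (.inl r)) (.inl n)
      simpa [comp3, RI, IR, Fintype.sum_sum_type, Finset.mul_sum, Finset.sum_mul,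
        mul_ite, ite_mul, Finset.sum_ite_eq, Finset.sum_ite_eq'] using h'
    · have h' := congrFun (congrFun (congrFun (congrFun (congrFun (congrFun H
        (.inr al)) (.inl l)) (.inl m)) (.inl r)) (.inl n)) (.inr be)
      simpa [comp3, RI, IR, Fintype.sum_sum_type, Finset.mul_sum, Finset.sum_mul,
        mul_ite, ite_mul, Finset.sum_ite_eq, Finset.sum_ite_eq'] using h'
    · have h' := congrFun (congrFun (congrFun (congrFun (congrFun (congrFun H
        (.inl l)) (.inr al)) (.inl m)) (.inl r)) (.inr be)) (.inl n)
      simpa [comp3, RI, IR, Fintype.sum_sum_type, Finset.mul_sum, Finset.sum_mul,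
        mul_ite, ite_mul, Finset.sum_ite_eq, Finset.sum_ite_eq'] using h'
  · rintro ⟨h1, h2, h3, h4, h5, h6⟩
    funext a b c g h i
    rcases a with a1 | a1 <;> rcases b with a2 | a2 <;> rcases c with a3 | a3 <;>
      rcases g with b1 | b1 <;> rcases h with b2 | b2 <;> rcases i with b3 | b3 <;>
      simp [comp3, RI, IR, Fintype.sum_sum_type, Finset.mul_sum, Finset.sum_mul,
        mul_ite, ite_mul, Finset.sum_ite_eq, Finset.sum_ite_eq'] <;>
      first
        | (split_ifs <;> rfl)
        | exact h1 a1 b3 a2 a3 b2 b1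
        | exact h2 a3 b1 a1 a2 b3 b2
        | exact h3 a2 b2 a1 a3 b3 b1
        | exact h4 a1 a2 b3 b2 a3 b1
        | exact h5 a2 a3 b2 b1 a1 b3
        | exact h6 a1 a3 b3 b1 a2 b2
end

section
/- Let $R$ be a complex matrix with entries $R^{\lambda\alpha}_{\beta\mu}$ ($\lambda,\mu\in\{1,\dots,N_1\}$, $\alpha,\beta\in\{1,\dots,N_2\}$). Then $R$ satisfies the conditions $R^{\lambda\beta}_{\alpha\mu}=R^{\mu\alpha}_{\beta\lambda}=\overline{R}^{\mu\beta}_{\alpha\lambda}$ together with $\sum_{\rho,\gamma}R^{\lambda\gamma}_{\alpha\rho}\overline{R}^{\mu\gamma}_{\beta\rho}=\delta^\lambda_\mu\delta_{\alpha\beta}$ if and only if $R^{\lambda\alpha}_{\beta\mu}=S^{\lambda\alpha}_{\mu\beta}+iT^{\lambda\alpha}_{\mu\beta}$, where $S$ is real and symmetric separately in $(\lambda,\mu)$ and in $(\alpha,\beta)$, $T$ is real and antisymmetric separately in $(\lambda,\mu)$ and in $(\alpha,\beta)$, and, viewing $S,T$ as endomorphisms of $\mathbb{R}^{N_1}\otimes\mathbb{R}^{N_2}$,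 one has $S^2+T^2=\mathrm{id}$ and $[S,T]=0$. -/
open Finset

/-- The hermiticity/unitarity conditions (3.16) on `R` are equivalent to the decomposition
`R^{λα}_{βμ} = S^{λα}_{μβ} + i T^{λα}_{μβ}` with `S` real symmetric in each index pair,
`T` real antisymmetric in each index pair, `S² + T² = id` and `[S,T] = 0`. -/
theorem stmt3 (N1 N2 : ℕ) (R : Fin N1 → Fin N2 → Fin N2 → Fin N1 → ℂ) :
    ((∀ (l m : Fin N1) (al be : Fin N2), R l be al m = R m al be l)
      ∧ (∀ (l m : Fin N1) (al be : Fin N2), R l be al m = starRingEnd ℂ (R m be al l))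
      ∧ (∀ (l m : Fin N1) (al be : Fin N2),
          ∑ r, ∑ g, R l g al r * starRingEnd ℂ (R m g be r)
            = (if l = m then 1 else 0) * (if al = be then 1 else 0)))
    ↔ (∃ S T : Fin N1 → Fin N2 → Fin N1 → Fin N2 → ℝ,
        (∀ (l m : Fin N1) (al be : Fin N2),
            R l al be m = (S l al m be : ℂ) + Complex.I * (T l al m be : ℂ))
        ∧ (∀ (l m : Fin N1) (al be : Fin N2), S l al m be = S m al l be)
        ∧ (∀ (l m : Fin N1) (al be : Fin N2), S l al m be = S l be m al)
        ∧ (∀ (l m : Fin N1) (al be : Fin N2), T l al m be = - T m al l be)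
        ∧ (∀ (l m : Fin N1) (al be : Fin N2), T l al m be = - T l be m al)
        ∧ (∀ (l m : Fin N1) (al be : Fin N2),
            (∑ r, ∑ g, S l al r g * S r g m be) + (∑ r, ∑ g, T l al r g * T r g m be)
              = (if l = m then 1 else 0) * (if al = be then 1 else 0))
        ∧ (∀ (l m : Fin N1) (al be : Fin N2),
            (∑ r, ∑ g, S l al r g * T r g m be) = ∑ r, ∑ g, T l al r g * S r g m be)) := by
  constructor
  · rintro ⟨h1, h2, h3⟩
    have hS1 : ∀ (l m : Fin N1) (al be : Fin N2), (R l al be m).re = (R m al be l).re :=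
      fun l m al be => by simpa using congrArg Complex.re (h2 l m be al)
    have hT1 : ∀ (l m : Fin N1) (al be : Fin N2), (R l al be m).im = -(R m al be l).im :=
      fun l m al be => by simpa using congrArg Complex.im (h2 l m be al)
    have hS2 : ∀ (l m : Fin N1) (al be : Fin N2), (R l al be m).re = (R l be al m).re :=
      fun l m al be => by simpa using congrArg Complex.re ((h1 l m be al).trans (h2 m l al be))
    have hT2 : ∀ (l m : Fin N1) (al be : Fin N2), (R l al be m).im = -(R l be al m).im :=
      fun l m al be => by simpa using congrArg Complex.im ((h1 l m be al).trans (h2 m l al be))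
    refine ⟨fun l al m be => (R l al be m).re, fun l al m be => (R l al be m).im,
      ?_, hS1, hS2, hT1, hT2, ?_, ?_⟩
    · intro l m al be
      rw [mul_comm]
      exact (Complex.re_add_im _).symm
    · intro l m al be
      have h := h3 l m al be
      rw [Complex.ext_iff] at h
      obtain ⟨hre, -⟩ := h
      simp only [Complex.re_sum, Complex.mul_re, Complex.conj_re, Complex.conj_im,
        apply_ite Complex.re, apply_ite Complex.im, Complex.one_re, Complex.zero_re,
        Complex.one_im, Complex.zero_im] at hre
      have key : ∀ (r : Fin N1) (g : Fin N2),
          (R l g al r).re * (R m g be r).re - (R l g al r).im * -(R m g be r).im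
            = (R l al g r).re * (R r g be m).re + (R l al g r).im * (R r g be m).im := by
        intro r g
        rw [hS2 l r g al, hS1 m r g be, hT2 l r g al, hT1 m r g be]
        ring
      rw [Finset.sum_congr rfl (fun r _ => Finset.sum_congr rfl (fun g _ => key r g))] at hre
      simp only [Finset.sum_add_distrib] at hre
      simp only []
      rw [hre]
      split_ifs <;> ring
    · intro l m al be
      have h := h3 l m al be
      rw [Complex.ext_iff] at h
      obtain ⟨-, him⟩ := h
      simp only [Complex.im_sum, Complex.mul_im, Complex.conj_re, Complex.conj_im,
        apply_ite Complex.re, apply_ite Complex.im, Complex.one_re, Complex.zero_re,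
        Complex.one_im, Complex.zero_im] at him
      have key : ∀ (r : Fin N1) (g : Fin N2),
          (R l g al r).re * -(R m g be r).im + (R l g al r).im * (R m g be r).re
            = (R l al g r).re * (R r g be m).im - (R l al g r).im * (R r g be m).re := by
        intro r g
        rw [hS2 l r g al, hS1 m r g be, hT2 l r g al, hT1 m r g be]
        ring
      rw [Finset.sum_congr rfl (fun r _ => Finset.sum_congr rfl (fun g _ => key r g))] at him
      simp only [Finset.sum_sub_distrib] at him
      simp only []
      rw [← sub_eq_zero, him]
      split_ifs <;> ring
  · rintro ⟨S, T, hdec, hS1, hS2, hT1, hT2, hSS, hST⟩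
    refine ⟨?_, ?_, ?_⟩
    · intro l m al be
      rw [hdec l m be al, hdec m l al be,
        (hS1 m l al be).trans (hS2 l m al be),
        show T m al l be = T l be m al by rw [hT1 m l al be, hT2 l m al be]; ring]
    · intro l m al be
      rw [hdec l m be al, hdec m l be al, hS1 m l be al, hT1 m l be al, map_add, map_mul,
        Complex.conj_I, Complex.conj_ofReal, Complex.conj_ofReal]
      push_cast
      ring
    · intro l m al be
      have key : ∀ (r : Fin N1) (g : Fin N2),
          R l g al r * starRingEnd ℂ (R m g be r)
            = ((S l al r g * S r g m be + T l al r g * T r g m be : ℝ) : ℂ)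
              + Complex.I * ((S l al r g * T r g m be - T l al r g * S r g m be : ℝ) : ℂ) := by
        intro r g
        rw [hdec l r g al, hdec m r g be, hS2 l r g al, hT2 l r g al, hS1 m r g be, hT1 m r g be]
        rw [map_add, map_mul, Complex.conj_I, Complex.conj_ofReal, Complex.conj_ofReal]
        push_cast
        ring_nf
        rw [Complex.I_sq]
        ring
      rw [Finset.sum_congr rfl (fun r _ => Finset.sum_congr rfl (fun g _ => key r g))]
      simp only [Finset.sum_add_distrib, ← Finset.mul_sum, ← Complex.ofReal_sum,
        Finset.sum_sub_distrib]
      rw [show (∑ r, ∑ g, S l al r g * T r g m be) - (∑ r, ∑ g, T l al r g * S r g m be) = 0 by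
        rw [hST l m al be]; ring]
      rw [hSS l m al be]
      push_cast [apply_ite (fun x : ℝ => (x : ℂ))]
      simp
end

section
/- Let $A_1,\dots,A_p$ be linearly independent real symmetric $N_1\times N_1$ matrices, $C_1,\dots,C_q$ linearly independent real antisymmetric $N_1\times N_1$ matrices, $B_1,\dots,B_p$ linearly independent real symmetric $N_2\times N_2$ matrices, and $D_1,\dots,D_q$ linearly independent real antisymmetric $N_2\times N_2$ matrices. Set $\hat{R}=\sum_r A_r\otimes B_r+i\sum_a C_a\otimes D_a$ acting on $\mathbb{C}^{N_1}\otimes\mathbb{C}^{N_2}$. Then the two relations $\sum_{r,s}[A_r,A_s]\otimes B_r\otimes B_s+\sum_{r,a}[A_r,C_a]\otimes(B_r\otimes D_a-D_a\otimes B_r)+\sum_{a,b}[C_a,C_b]\otimes D_a\otimes D_b=0$ (as an endomorphism of $\mathbb{R}^{N_1}\otimes\mathbb{R}^{N_2}\otimes\mathbb{R}^{N_2}$) and its analogue with the roles of the two factors exchanged hold if and only if all commutators $[A_r,A_s]$, $[A_r,C_a]$, $[C_a,C_b]$, $[B_r,B_s]$, $[B_r,D_a]$, $[D_a,D_b]$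 vanish. -/
open Finset Matrix Kronecker

section helpers

variable {l m n pp : Type*}

theorem sub_kron (A₁ A₂ : Matrix l m ℝ) (B : Matrix n pp ℝ) :
    (A₁ - A₂) ⊗ₖ B = A₁ ⊗ₖ B - A₂ ⊗ₖ B := by
  ext ⟨i, j⟩ ⟨k, r⟩
  simp [Matrix.sub_apply, sub_mul]

theorem kron_sub (A : Matrix l m ℝ) (B₁ B₂ : Matrix n pp ℝ) :
    A ⊗ₖ (B₁ - B₂) = A ⊗ₖ B₁ - A ⊗ₖ B₂ := by
  ext ⟨i, j⟩ ⟨k, r⟩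
  simp [Matrix.sub_apply, mul_sub]

theorem neg_kron (A : Matrix l m ℝ) (B : Matrix n pp ℝ) :
    (-A) ⊗ₖ B = -(A ⊗ₖ B) := by
  ext ⟨i, j⟩ ⟨k, r⟩
  simp

/-- symmetric matrices as a submodule -/
def symM (n : Type*) : Submodule ℝ (Matrix n n ℝ) where
  carrier := {X | Xᵀ = X}
  add_mem' {a b} ha hb := by simp_all [Matrix.transpose_add]
  zero_mem' := by simp
  smul_mem' c {x} hx := by simp_all [Matrix.transpose_smul]

/-- antisymmetric matrices as a submodule -/
def asymM (n : Type*) : Submodule ℝ (Matrix n n ℝ) where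
  carrier := {X | Xᵀ = -X}
  add_mem' {a b} ha hb := by simp_all [Matrix.transpose_add]; abel
  zero_mem' := by simp
  smul_mem' c {x} hx := by simp_all [Matrix.transpose_smul]

theorem symM_disjoint_asymM (n : Type*) : Disjoint (symM n) (asymM n) := by
  rw [Submodule.disjoint_def]
  intro X hX hX'
  have h1 : Xᵀ = X := hX
  have h2 : Xᵀ = -X := hX'
  have hXX : X = -X := h1.symm.trans h2
  have h3 : (2 : ℝ) • X = 0 := by
    rw [two_smul]
    nth_rewrite 2 [hXX]
    simp
  simpa using (smul_eq_zero.mp h3).resolve_left (by norm_num)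

theorem elim_indep {p q : ℕ} {n : Type*}
    (B : Fin p → Matrix n n ℝ) (D : Fin q → Matrix n n ℝ)
    (hB : ∀ r, (B r)ᵀ = B r) (hD : ∀ a, (D a)ᵀ = - D a)
    (hBind : LinearIndependent ℝ B) (hDind : LinearIndependent ℝ D) :
    LinearIndependent ℝ (Sum.elim B D) := by
  apply hBind.sum_type hDind
  have h1 : Submodule.span ℝ (Set.range B) ≤ symM n := by
    rw [Submodule.span_le]; rintro x ⟨r, rfl⟩; exact hB r
  have h2 : Submodule.span ℝ (Set.range D) ≤ asymM n := by
    rw [Submodule.span_le]; rintro x ⟨a, rfl⟩; exact hD a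
  exact (symM_disjoint_asymM n).mono h1 h2

/-- The key extraction lemma. -/
theorem key {ι : Type*} [Fintype ι] {m n : Type*} [Fintype m] [Fintype n]
    (E : ι → Matrix n n ℝ) (hE : LinearIndependent ℝ E)
    (M : ι → ι → Matrix m m ℝ)
    (h : ∑ i, ∑ j, M i j ⊗ₖ (E i ⊗ₖ E j) = 0) : ∀ i j, M i j = 0 := by
  have hE' := Fintype.linearIndependent_iff.mp hE
  intro i j
  ext x y
  have step1 : ∀ i', ∑ j', (M i' j' x y) • E j' = 0 := by
    intro i'
    ext u' v'
    have hc : ∑ i'', (∑ j', M i'' j' x y * E j' u' v') • E i'' = 0 := by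
      ext u v
      have := congrFun (congrFun h (x, (u, u'))) (y, (v, v'))
      simp only [Matrix.sum_apply, Matrix.zero_apply, kroneckerMap_apply,
        Matrix.smul_apply, smul_eq_mul] at this ⊢
      rw [← this]
      apply Finset.sum_congr rfl
      intro i'' _
      rw [Finset.sum_mul]
      apply Finset.sum_congr rfl
      intro j' _
      ring
    have := hE' _ hc i'
    simpa [Matrix.sum_apply] using this
  have := hE' _ (step1 i) j
  simpa using this

/-- The reorganization of the sum over a sum type. -/
theorem expand_sum {p q : ℕ} {n1 n2 : Type*} [Fintype n1] [Fintype n2]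
    (A : Fin p → Matrix n1 n1 ℝ) (B : Fin p → Matrix n2 n2 ℝ)
    (C : Fin q → Matrix n1 n1 ℝ) (D : Fin q → Matrix n2 n2 ℝ) :
    ∑ i, ∑ j, (Sum.elim A C i * Sum.elim A C j - Sum.elim A C j * Sum.elim A C i)
        ⊗ₖ (Sum.elim B D i ⊗ₖ Sum.elim B D j)
    = (∑ r, ∑ s, (A r * A s - A s * A r) ⊗ₖ ((B r) ⊗ₖ (B s)))
      + (∑ r, ∑ a, (A r * C a - C a * A r) ⊗ₖ ((B r) ⊗ₖ (D a) - (D a) ⊗ₖ (B r)))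
      + (∑ a, ∑ b, (C a * C b - C b * C a) ⊗ₖ ((D a) ⊗ₖ (D b))) := by
  have cross : ∑ a, ∑ r, (C a * A r - A r * C a) ⊗ₖ ((D a) ⊗ₖ (B r))
      = - ∑ r, ∑ a, (A r * C a - C a * A r) ⊗ₖ ((D a) ⊗ₖ (B r)) := by
    rw [Finset.sum_comm]
    rw [← Finset.sum_neg_distrib]
    apply Finset.sum_congr rfl
    intro r _
    rw [← Finset.sum_neg_distrib]
    apply Finset.sum_congr rfl
    intro a _
    rw [← neg_kron, neg_sub]
  simp only [Fintype.sum_sum_type, Sum.elim_inl, Sum.elim_inr]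
  rw [Finset.sum_add_distrib, Finset.sum_add_distrib, cross]
  simp only [kron_sub, Finset.sum_sub_distrib]
  abel

end helpers

/-- The two tensor relations with all commutators are equivalent to the vanishing
of all the commutators `[A_r,A_s], [A_r,C_a], [C_a,C_b], [B_r,B_s], [B_r,D_a], [D_a,D_b]`. -/
theorem stmt4 (N1 N2 p q : ℕ)
    (A : Fin p → Matrix (Fin N1) (Fin N1) ℝ) (B : Fin p → Matrix (Fin N2) (Fin N2) ℝ)
    (C : Fin q → Matrix (Fin N1) (Fin N1) ℝ) (D : Fin q → Matrix (Fin N2) (Fin N2) ℝ)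
    (hA : ∀ r, (A r)ᵀ = A r) (hB : ∀ r, (B r)ᵀ = B r)
    (hC : ∀ a, (C a)ᵀ = - C a) (hD : ∀ a, (D a)ᵀ = - D a)
    (hAind : LinearIndependent ℝ A) (hBind : LinearIndependent ℝ B)
    (hCind : LinearIndependent ℝ C) (hDind : LinearIndependent ℝ D) :
    (((∑ r, ∑ s, (A r * A s - A s * A r) ⊗ₖ ((B r) ⊗ₖ (B s)))
        + (∑ r, ∑ a, (A r * C a - C a * A r) ⊗ₖ ((B r) ⊗ₖ (D a) - (D a) ⊗ₖ (B r)))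
        + (∑ a, ∑ b, (C a * C b - C b * C a) ⊗ₖ ((D a) ⊗ₖ (D b))) = 0
      ∧ (∑ r, ∑ s, (B r * B s - B s * B r) ⊗ₖ ((A r) ⊗ₖ (A s)))
        + (∑ r, ∑ a, (B r * D a - D a * B r) ⊗ₖ ((A r) ⊗ₖ (C a) - (C a) ⊗ₖ (A r)))
        + (∑ a, ∑ b, (D a * D b - D b * D a) ⊗ₖ ((C a) ⊗ₖ (C b))) = 0)
    ↔ ((∀ r s, A r * A s = A s * A r) ∧ (∀ r a, A r * C a = C a * A r)
        ∧ (∀ a b, C a * C b = C b * C a)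
        ∧ (∀ r s, B r * B s = B s * B r) ∧ (∀ r a, B r * D a = D a * B r)
        ∧ (∀ a b, D a * D b = D b * D a))) := by
  constructor
  · rintro ⟨h1, h2⟩
    have k1 := key (Sum.elim B D) (elim_indep B D hB hD hBind hDind)
      (fun i j => Sum.elim A C i * Sum.elim A C j - Sum.elim A C j * Sum.elim A C i)
      (by rw [expand_sum A B C D]; exact h1)
    have k2 := key (Sum.elim A C) (elim_indep A C hA hC hAind hCind)
      (fun i j => Sum.elim B D i * Sum.elim B D j - Sum.elim B D j * Sum.elim B D i)
      (by rw [expand_sum B A D C]; exact h2)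
    refine ⟨fun r s => ?_, fun r a => ?_, fun a b => ?_,
            fun r s => ?_, fun r a => ?_, fun a b => ?_⟩
    · exact sub_eq_zero.mp (by simpa using k1 (Sum.inl r) (Sum.inl s))
    · exact sub_eq_zero.mp (by simpa using k1 (Sum.inl r) (Sum.inr a))
    · exact sub_eq_zero.mp (by simpa using k1 (Sum.inr a) (Sum.inr b))
    · exact sub_eq_zero.mp (by simpa using k2 (Sum.inl r) (Sum.inl s))
    · exact sub_eq_zero.mp (by simpa using k2 (Sum.inl r) (Sum.inr a))
    · exact sub_eq_zero.mp (by simpa using k2 (Sum.inr a) (Sum.inr b))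
  · rintro ⟨h1, h2, h3, h4, h5, h6⟩
    have e1 : ∀ r s, A r * A s - A s * A r = 0 := fun r s => sub_eq_zero.mpr (h1 r s)
    have e2 : ∀ r a, A r * C a - C a * A r = 0 := fun r a => sub_eq_zero.mpr (h2 r a)
    have e3 : ∀ a b, C a * C b - C b * C a = 0 := fun a b => sub_eq_zero.mpr (h3 a b)
    have e4 : ∀ r s, B r * B s - B s * B r = 0 := fun r s => sub_eq_zero.mpr (h4 r s)
    have e5 : ∀ r a, B r * D a - D a * B r = 0 := fun r a => sub_eq_zero.mpr (h5 r a)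
    have e6 : ∀ a b, D a * D b - D b * D a = 0 := fun a b => sub_eq_zero.mpr (h6 a b)
    constructor <;>
      simp [e1, e2, e3, e4, e5, e6, Matrix.zero_kronecker, Finset.sum_const_zero]
end

section
/- Let $\vec v_1,\vec v_2\in\mathbb{R}^3$ and $u\in\mathbb{R}$ with $u^2+\|\vec v_1\|^2\|\vec v_2\|^2=1$, and define the matrix $R$ on indices in $\{0,1,2,3\}$ by $R^{\lambda\alpha}_{\beta\mu}=u\,\delta^\lambda_\mu\delta^\alpha_\beta+i\,J^-(\vec v_1)^\lambda_\mu\,J^-(\vec v_2)^\alpha_\beta$. Then $R$ satisfies the conditions $R^{\lambda\beta}_{\alpha\mu}=R^{\mu\alpha}_{\beta\lambda}=\overline{R}^{\mu\beta}_{\alpha\lambda}$, the unitarity condition $\sum_{\rho,\gamma}R^{\lambda\gamma}_{\alpha\rho}\overline{R}^{\mu\gamma}_{\beta\rho}=\delta^\lambda_\mu\delta_{\alpha\beta}$, and the two quadratic Yang–Baxter relations $R^{\lambda\beta}_{\alpha\rho}R^{\rho\delta}_{\gamma\mu}=R^{\lambda\delta}_{\gamma\rho}R^{\rho\beta}_{\alpha\mu}$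 and $R^{\lambda\beta}_{\gamma\nu}R^{\mu\gamma}_{\alpha\rho}=R^{\mu\beta}_{\gamma\rho}R^{\lambda\gamma}_{\alpha\nu}$. -/
open Finset Matrix

/-- Levi-Civita symbol on `{1,2,3}` (modelled by `Fin 3`). -/
def eps (a b c : Fin 3) : ℝ :=
  if (a, b, c) = (0, 1, 2) ∨ (a, b, c) = (1, 2, 0) ∨ (a, b, c) = (2, 0, 1) then 1
  else if (a, b, c) = (2, 1, 0) ∨ (a, b, c) = (1, 0, 2) ∨ (a, b, c) = (0, 2, 1) then -1
  else 0

/-- `(J_a)_{μν} = s(δ_{0μ}δ_{aν} - δ_{aμ}δ_{0ν}) + ∑_{b,c} ε_{abc} δ_{bμ} δ_{cν}`,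
with `s = ∓1` giving `J⁺`/`J⁻`.  Indices `μ,ν ∈ {0,1,2,3}` modelled by `Fin 4`,
the value `a ∈ {1,2,3}` embedded as `a.succ`. -/
noncomputable def Jmat (s : ℝ) (a : Fin 3) : Matrix (Fin 4) (Fin 4) ℝ :=
  Matrix.of fun μ ν =>
    s * ((if μ = 0 then 1 else 0) * (if ν = a.succ then 1 else 0)
          - (if μ = a.succ then 1 else 0) * (if ν = 0 then 1 else 0))
    + ∑ b, ∑ c, eps a b c * ((if μ = b.succ then 1 else 0) * (if ν = c.succ then 1 else 0))

/-- The matrices `J⁺_a`. -/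
noncomputable def Jp : Fin 3 → Matrix (Fin 4) (Fin 4) ℝ := Jmat (-1)

/-- The matrices `J⁻_a`. -/
noncomputable def Jm : Fin 3 → Matrix (Fin 4) (Fin 4) ℝ := Jmat 1

/-- `J⁻(v) = ∑_a v^a J⁻_a`. -/
noncomputable def Jmv (v : Fin 3 → ℝ) : Matrix (Fin 4) (Fin 4) ℝ := ∑ a, v a • Jm a

/-- The quaternionic `R`-matrix `R^{λα}_{βμ} = u δ^λ_μ δ^α_β + i J⁻(v₁)^λ_μ J⁻(v₂)^α_β`;
`Rq u v1 v2 l al be m` denotes `R^{λα}_{βμ}`. -/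
noncomputable def Rq (u : ℝ) (v1 v2 : Fin 3 → ℝ) : Fin 4 → Fin 4 → Fin 4 → Fin 4 → ℂ :=
  fun l al be m =>
    (u : ℂ) * ((if l = m then 1 else 0) * (if al = be then 1 else 0))
    + Complex.I * (Jmv v1 l m : ℝ) * (Jmv v2 al be : ℝ)

private lemma Jmv_eq' (v : Fin 3 → ℝ) :
    Jmv v = !![0, v 0, v 1, v 2; -v 0, 0, v 2, -v 1; -v 1, -v 2, 0, v 0; -v 2, v 1, -v 0, 0] := by
  ext i j
  fin_cases i <;> fin_cases j <;>
    simp [Jmv, Jm, Jmat, eps, Matrix.sum_apply, Fin.sum_univ_three, Fin.succ]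

private lemma L1' (v : Fin 3 → ℝ) (i j : Fin 4) : Jmv v j i = - Jmv v i j := by
  rw [Jmv_eq']; fin_cases i <;> fin_cases j <;> simp <;> ring

private lemma L2' (v : Fin 3 → ℝ) (i j : Fin 4) :
    ∑ r, Jmv v i r * Jmv v j r = (∑ a, (v a) ^ 2) * (if i = j then 1 else 0) := by
  rw [Jmv_eq']; fin_cases i <;> fin_cases j <;>
    simp [Fin.sum_univ_four, Fin.sum_univ_three] <;> ring

private lemma ybe1' (u : ℝ) (v1 v2 : Fin 3 → ℝ) (l m al g be de : Fin 4) :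
    ∑ r, Rq u v1 v2 l be al r * Rq u v1 v2 r de g m
      = ∑ r, Rq u v1 v2 l de g r * Rq u v1 v2 r be al m := by
  fin_cases l <;> fin_cases m <;>
    (simp only [Rq, Fin.sum_univ_four]; push_cast; ring_nf)

private lemma ybe2' (u : ℝ) (v1 v2 : Fin 3 → ℝ) (l m n r al be : Fin 4) :
    ∑ g, Rq u v1 v2 l be g n * Rq u v1 v2 m g al r
      = ∑ g, Rq u v1 v2 m be g r * Rq u v1 v2 l g al n := by
  fin_cases al <;> fin_cases be <;>
    (simp only [Rq, Fin.sum_univ_four]; push_cast; ring_nf)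

/-- With `u² + ‖v₁‖²‖v₂‖² = 1`, the quaternionic `R`-matrix satisfies the
hermiticity/centrality conditions, the unitarity condition and both quadratic
Yang–Baxter relations. -/
theorem stmt14 (u : ℝ) (v1 v2 : Fin 3 → ℝ)
    (h : u ^ 2 + (∑ a, (v1 a) ^ 2) * (∑ a, (v2 a) ^ 2) = 1) :
    let R := Rq u v1 v2
    (∀ l m al be : Fin 4, R l be al m = R m al be l)
    ∧ (∀ l m al be : Fin 4, R l be al m = starRingEnd ℂ (R m be al l))
    ∧ (∀ l m al be : Fin 4,
        ∑ r, ∑ g, R l g al r * starRingEnd ℂ (R m g be r)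
          = (if l = m then 1 else 0) * (if al = be then 1 else 0))
    ∧ (∀ l m al g be de : Fin 4,
        ∑ r, R l be al r * R r de g m = ∑ r, R l de g r * R r be al m)
    ∧ (∀ l m n r al be : Fin 4,
        ∑ g, R l be g n * R m g al r = ∑ g, R m be g r * R l g al n) := by
  intro R
  have hRdef : R = Rq u v1 v2 := rfl
  set A : Fin 4 → Fin 4 → ℂ := fun i j => ((Jmv v1 i j : ℝ) : ℂ) with hAdef
  set B : Fin 4 → Fin 4 → ℂ := fun i j => ((Jmv v2 i j : ℝ) : ℂ) with hBdef
  have hA : ∀ i j : Fin 4, A j i = -A i j := by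
    intro i j; simp only [hAdef]; rw [L1']; push_cast; ring
  have hB : ∀ i j : Fin 4, B j i = -B i j := by
    intro i j; simp only [hBdef]; rw [L1']; push_cast; ring
  have hA2 : ∀ i j : Fin 4, ∑ r, A i r * A j r
      = ((∑ a, (v1 a) ^ 2 : ℝ) : ℂ) * (if i = j then 1 else 0) := by
    intro i j; simp only [hAdef]
    rw [show ∑ r, ((Jmv v1 i r : ℝ):ℂ) * ((Jmv v1 j r : ℝ):ℂ)
        = ((∑ r, Jmv v1 i r * Jmv v1 j r : ℝ) : ℂ) by push_cast; rfl, L2']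
    push_cast; split <;> simp
  have hB2 : ∀ i j : Fin 4, ∑ g, B g i * B g j
      = ((∑ a, (v2 a) ^ 2 : ℝ) : ℂ) * (if i = j then 1 else 0) := by
    intro i j
    rw [show ∑ g, B g i * B g j = ∑ g, B i g * B j g by
      exact Finset.sum_congr rfl fun g _ => by rw [hB i g, hB j g]; ring]
    simp only [hBdef]
    rw [show ∑ r, ((Jmv v2 i r : ℝ):ℂ) * ((Jmv v2 j r : ℝ):ℂ)
        = ((∑ r, Jmv v2 i r * Jmv v2 j r : ℝ) : ℂ) by push_cast; rfl, L2']
    push_cast; split <;> simp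
  have hR : ∀ l al be m : Fin 4, R l al be m
      = (u:ℂ) * ((if l = m then 1 else 0) * (if al = be then 1 else 0))
        + Complex.I * A l m * B al be := by
    intro l al be m; rfl
  have hRc : ∀ l al be m : Fin 4, (starRingEnd ℂ) (R l al be m)
      = (u:ℂ) * ((if l = m then 1 else 0) * (if al = be then 1 else 0))
        - Complex.I * A l m * B al be := by
    intro l al be m
    rw [hR]
    simp only [hAdef, hBdef, map_add, _root_.map_mul, Complex.conj_I, Complex.conj_ofReal,
      apply_ite (starRingEnd ℂ), _root_.map_one, map_zero]
    ring
  refine ⟨?_, ?_, ?_, ?_, ?_⟩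
  · intro l m al be
    rw [hR, hR, hA l m, hB al be]
    by_cases h1 : l = m <;> by_cases h2 : al = be <;>
      simp [h1, h2, eq_comm] <;> ring
  · intro l m al be
    rw [hR, hRc, hA l m]
    by_cases h1 : l = m <;> simp [h1, eq_comm] <;> ring
  · intro l m al be
    have step : ∀ r g : Fin 4, R l g al r * (starRingEnd ℂ) (R m g be r)
        = ((u:ℂ)^2 * ((if l = r then 1 else 0) * (if m = r then 1 else 0)))
            * ((if g = al then 1 else 0) * (if g = be then 1 else 0))
          + (-(Complex.I * u) * ((if l = r then 1 else 0) * A m r))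
            * ((if g = al then 1 else 0) * B g be)
          + ((Complex.I * u) * (A l r * (if m = r then 1 else 0)))
            * (B g al * (if g = be then 1 else 0))
          + (A l r * A m r) * (B g al * B g be) := by
      intro r g; rw [hR, hRc]; ring_nf; rw [Complex.I_sq]; ring
    have d1 : ∑ r : Fin 4, (if l = r then (1:ℂ) else 0) * (if m = r then 1 else 0)
        = if l = m then 1 else 0 := by simp [ite_mul, Finset.sum_ite_eq]
    have d2 : ∑ r : Fin 4, (if l = r then (1:ℂ) else 0) * A m r = A m l := by
      simp [ite_mul, Finset.sum_ite_eq]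
    have d3 : ∑ r : Fin 4, A l r * (if m = r then (1:ℂ) else 0) = A l m := by
      simp [mul_ite, Finset.sum_ite_eq]
    have d4 : ∑ g : Fin 4, (if g = al then (1:ℂ) else 0) * B g be = B al be := by
      simp [ite_mul, Finset.sum_ite_eq']
    have d5 : ∑ g : Fin 4, B g al * (if g = be then (1:ℂ) else 0) = B be al := by
      simp [mul_ite, Finset.sum_ite_eq']
    have d6 : ∑ g : Fin 4, (if g = al then (1:ℂ) else 0) * (if g = be then 1 else 0)
        = if al = be then 1 else 0 := by
      simp [ite_mul, Finset.sum_ite_eq', eq_comm]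
    have hc : (u:ℂ)^2 + ((∑ a, (v1 a)^2 : ℝ):ℂ) * ((∑ a, (v2 a)^2 : ℝ):ℂ) = 1 := by
      exact_mod_cast congrArg (fun x : ℝ => (x:ℂ)) h
    calc ∑ r, ∑ g, R l g al r * (starRingEnd ℂ) (R m g be r)
        = ∑ r : Fin 4, ∑ g : Fin 4,
          (((u:ℂ)^2 * ((if l = r then 1 else 0) * (if m = r then 1 else 0)))
            * ((if g = al then 1 else 0) * (if g = be then 1 else 0))
          + (-(Complex.I * u) * ((if l = r then 1 else 0) * A m r))
            * ((if g = al then 1 else 0) * B g be)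
          + ((Complex.I * u) * (A l r * (if m = r then 1 else 0)))
            * (B g al * (if g = be then 1 else 0))
          + (A l r * A m r) * (B g al * B g be)) := by
            exact Finset.sum_congr rfl fun r _ => Finset.sum_congr rfl fun g _ => step r g
      _ = ((u:ℂ)^2 * ∑ r : Fin 4, (if l = r then (1:ℂ) else 0) * (if m = r then 1 else 0))
            * (∑ g : Fin 4, (if g = al then (1:ℂ) else 0) * (if g = be then 1 else 0))
          + (-(Complex.I * u) * ∑ r : Fin 4, (if l = r then (1:ℂ) else 0) * A m r)
            * (∑ g : Fin 4, (if g = al then (1:ℂ) else 0) * B g be)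
          + ((Complex.I * u) * ∑ r : Fin 4, A l r * (if m = r then (1:ℂ) else 0))
            * (∑ g : Fin 4, B g al * (if g = be then (1:ℂ) else 0))
          + (∑ r : Fin 4, A l r * A m r) * (∑ g : Fin 4, B g al * B g be) := by
            simp only [Finset.sum_add_distrib, ← Finset.sum_mul, ← Finset.mul_sum]
      _ = (if l = m then 1 else 0) * (if al = be then 1 else 0) := by
            rw [d1, d2, d3, d4, d5, d6, hA m l, hB be al, hA2, hB2]
            linear_combination ((if l = m then (1:ℂ) else 0) * (if al = be then (1:ℂ) else 0)) * hc
  · exact fun l m al g be de => ybe1' u v1 v2 l m al g be de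
  · exact fun l m n r al be => ybe2' u v1 v2 l m n r al be
end
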